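/- Let ⟨·,·⟩ be a real inner product on su(2) and let X₁, X₂, X₃ and X̃₁, X̃₂, X̃₃ be two orthonormal bases of su(2) with structure matrices C and C̃ respectively. Then (trace C)² = (trace C̃)². Equivalently, the quantity a² with a = −(c¹₂₃ + c²₃₁ + c³₁₂)/2 does not depend on the choice of orthonormal basis. -/
import Mathlib


open Matrix BigOperators

/-- The structure matrix `C = [[c¹₂₃, c¹₃₁, c¹₁₂], [c²₂₃, c²₃₁, c²₁₂], [c³₂₃, c³₃₁, c³₁₂]]`
associated to structure constants `c^k_{ij}` (indices shifted down by one). -/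
def structureMatrix (c : Fin 3 → Fin 3 → Fin 3 → ℝ) : Matrix (Fin 3) (Fin 3) ℝ :=
  !![c 0 1 2, c 0 2 0, c 0 0 1;
     c 1 1 2, c 1 2 0, c 1 0 1;
     c 2 1 2, c 2 2 0, c 2 0 1]

/-- Let `B` be a real inner product on `su(2)` and let `X₁, X₂, X₃` and
`X̃₁, X̃₂, X̃₃` be two orthonormal bases of `su(2)` with structure matrices `C`, `C̃`.
Then `(trace C)² = (trace C̃)²`; i.e. the invariant `a² = (trace C)²/4` is independent of
the choice of orthonormal basis. -/
theorem trace_sq_structure_matrix_invariant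
    (B : Matrix (Fin 2) (Fin 2) ℂ →ₗ[ℝ] Matrix (Fin 2) (Fin 2) ℂ →ₗ[ℝ] ℝ)
    (hsymm : ∀ A A' : Matrix (Fin 2) (Fin 2) ℂ, B A A' = B A' A)
    (hpos : ∀ A : Matrix (Fin 2) (Fin 2) ℂ, Aᴴ = -A → A.trace = 0 → A ≠ 0 → 0 < B A A)
    (X : Fin 3 → Matrix (Fin 2) (Fin 2) ℂ)
    (hmem : ∀ i, (X i)ᴴ = -X i ∧ (X i).trace = 0)
    (hind : LinearIndependent ℝ X)
    (hspan : ∀ A : Matrix (Fin 2) (Fin 2) ℂ, Aᴴ = -A → A.trace = 0 →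
      A ∈ Submodule.span ℝ (Set.range X))
    (hortho : ∀ i j, B (X i) (X j) = if i = j then 1 else 0)
    (c : Fin 3 → Fin 3 → Fin 3 → ℝ)
    (hc : ∀ i j, X i * X j - X j * X i = ∑ k, c k i j • X k)
    (Xt : Fin 3 → Matrix (Fin 2) (Fin 2) ℂ)
    (hmemt : ∀ i, (Xt i)ᴴ = -Xt i ∧ (Xt i).trace = 0)
    (hindt : LinearIndependent ℝ Xt)
    (hspant : ∀ A : Matrix (Fin 2) (Fin 2) ℂ, Aᴴ = -A → A.trace = 0 →
      A ∈ Submodule.span ℝ (Set.range Xt))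
    (horthot : ∀ i j, B (Xt i) (Xt j) = if i = j then 1 else 0)
    (ct : Fin 3 → Fin 3 → Fin 3 → ℝ)
    (hct : ∀ i j, Xt i * Xt j - Xt j * Xt i = ∑ k, ct k i j • Xt k) :
    (structureMatrix c).trace ^ 2 = (structureMatrix ct).trace ^ 2 := by
  classical
  -- antisymmetry of the structure constants
  have hanti : ∀ k i j, c k j i = - c k i j := by
    intro k i j
    have h : ∑ m, (c m j i + c m i j) • X m = 0 := by
      calc ∑ m, (c m j i + c m i j) • X m
          = (∑ m, c m j i • X m) + (∑ m, c m i j • X m) := by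
            rw [← Finset.sum_add_distrib]
            exact Finset.sum_congr rfl fun m _ => add_smul _ _ _
        _ = (X j * X i - X i * X j) + (X i * X j - X j * X i) := by
            rw [hc j i, hc i j]
        _ = 0 := by abel
    have := (Fintype.linearIndependent_iff.mp hind) _ h k
    linarith
  -- change-of-basis coefficients: Xt i = ∑ j, P i j • X j
  choose P hP using fun i =>
    (Submodule.mem_span_range_iff_exists_fun ℝ).mp (hspan (Xt i) (hmemt i).1 (hmemt i).2)
  -- B (X m) (Xt k) = P k m
  have hBX : ∀ m k, B (X m) (Xt k) = P k m := by
    intro m k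
    rw [← hP k, map_sum]
    have : ∀ j, B (X m) (P k j • X j) = P k j * (if m = j then 1 else 0) := by
      intro j; rw [_root_.map_smul, hortho m j, smul_eq_mul]
    rw [Finset.sum_congr rfl fun j _ => this j]
    simp
  -- rows of P are orthonormal
  have horthP : ∀ i j, ∑ p, P i p * P j p = if i = j then 1 else 0 := by
    intro i j
    rw [← horthot i j, ← hP i, map_sum, LinearMap.sum_apply]
    refine (Finset.sum_congr rfl fun p _ => ?_).symm
    rw [_root_.map_smul, LinearMap.smul_apply, hBX p j, smul_eq_mul]
  -- expansion of the bracket of the tilde basis in terms of the brackets of X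
  have hbr : ∀ i j, Xt i * Xt j - Xt j * Xt i
      = ∑ p, ∑ q, (P i p * P j q) • (X p * X q - X q * X p) := by
    intro i j
    rw [← hP i, ← hP j]
    simp only [Fin.sum_univ_three, add_mul, mul_add, smul_mul_assoc,
      mul_smul_comm, smul_smul, smul_sub]
    module
  -- formula for the tilde structure constants
  have hctf : ∀ k i j, ct k i j
      = ∑ p, ∑ q, ∑ m, P i p * P j q * (c m p q * P k m) := by
    intro k i j
    have h1 : B (Xt i * Xt j - Xt j * Xt i) (Xt k)
        = B (∑ m, ct m i j • Xt m) (Xt k) := by rw [hct i j]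
    have hrhs : B (∑ m, ct m i j • Xt m) (Xt k) = ct k i j := by
      rw [map_sum, LinearMap.sum_apply]
      have : ∀ m, (B (ct m i j • Xt m)) (Xt k)
          = ct m i j * (if m = k then 1 else 0) := by
        intro m; rw [_root_.map_smul, LinearMap.smul_apply, horthot m k, smul_eq_mul]
      rw [Finset.sum_congr rfl fun m _ => this m]
      simp
    have hlhs : B (Xt i * Xt j - Xt j * Xt i) (Xt k)
        = ∑ p, ∑ q, ∑ m, P i p * P j q * (c m p q * P k m) := by
      rw [hbr i j, map_sum, LinearMap.sum_apply]
      refine Finset.sum_congr rfl fun p _ => ?_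
      rw [map_sum, LinearMap.sum_apply]
      refine Finset.sum_congr rfl fun q _ => ?_
      rw [_root_.map_smul, LinearMap.smul_apply, smul_eq_mul, hc p q, map_sum,
        LinearMap.sum_apply, Finset.mul_sum]
      refine Finset.sum_congr rfl fun m _ => ?_
      rw [_root_.map_smul, LinearMap.smul_apply, hBX m k, smul_eq_mul]
    rw [← hrhs, ← h1, hlhs]
  -- the matrix P is orthogonal, so its determinant squares to 1
  set M : Matrix (Fin 3) (Fin 3) ℝ := Matrix.of P with hM
  have hMMT : M * Mᵀ = 1 := by
    ext i j
    rw [Matrix.mul_apply]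
    simp only [hM, Matrix.transpose_apply, Matrix.of_apply, Matrix.one_apply]
    exact horthP i j
  have hd2 : M.det ^ 2 = 1 := by
    have := congrArg Matrix.det hMMT
    rwa [Matrix.det_mul, Matrix.det_transpose, Matrix.det_one, ← sq] at this
  -- the key algebraic identity: trace C̃ = det P * trace C
  have hzz : ∀ k i, c k i i = 0 := fun k i => by have := hanti k i i; linarith
  have h10 : ∀ k, c k 1 0 = - c k 0 1 := fun k => hanti k 0 1
  have h20 : ∀ k, c k 2 0 = - c k 0 2 := fun k => hanti k 0 2
  have h21 : ∀ k, c k 2 1 = - c k 1 2 := fun k => hanti k 1 2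
  have hmain : ct 0 1 2 + ct 1 2 0 + ct 2 0 1
      = M.det * (c 0 1 2 + c 1 2 0 + c 2 0 1) := by
    have e0 := hctf 0 1 2
    have e1 := hctf 1 2 0
    have e2 := hctf 2 0 1
    simp only [Fin.sum_univ_three] at e0 e1 e2
    rw [e0, e1, e2, Matrix.det_fin_three]
    simp only [hM, Matrix.of_apply, h10, h20, h21, hzz]
    ring
  have htr : (structureMatrix c).trace = c 0 1 2 + c 1 2 0 + c 2 0 1 := by
    simp [structureMatrix, Matrix.trace, Matrix.diag, Fin.sum_univ_three]
  have htrt : (structureMatrix ct).trace = ct 0 1 2 + ct 1 2 0 + ct 2 0 1 := by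
    simp [structureMatrix, Matrix.trace, Matrix.diag, Fin.sum_univ_three]
  rw [htr, htrt, hmain, mul_pow, hd2, one_mul]
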